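/- Let A be a commutative ring and I, L ideals of A with I ∩ L = I·L. Then Q(L,I) = 0; equivalently, the restriction map Hom_A((I+L)/(I²+L), A/(I+L)) → Hom_A(I/(I²+I·L), A/(I+L)) is surjective. -/

import Mathlib

open Submodule

variable (A : Type*) [CommRing A]

/-- The natural map `I/(I² + I·L) → (I+L)/(I² + L)` induced by the inclusion `I ⊆ I + L`. -/
noncomputable def qIota (L I : Ideal A) :
    (↥I ⧸ Submodule.comap I.subtype (I ^ 2 + I * L)) →ₗ[A]
      (↥(I + L) ⧸ Submodule.comap (I + L).subtype (I ^ 2 + L)) :=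
  Submodule.liftQ _
    ((Submodule.comap (I + L).subtype (I ^ 2 + L)).mkQ.comp
      (Submodule.inclusion (le_sup_left : I ≤ I + L)))
    (by
      intro x hx
      have hle : I ^ 2 + I * L ≤ I ^ 2 + L := by
        rw [Submodule.add_eq_sup, Submodule.add_eq_sup]
        exact sup_le_sup_left (Ideal.mul_le_inf.trans inf_le_right) _
      simp only [LinearMap.mem_ker, LinearMap.comp_apply, Submodule.mkQ_apply,
        Submodule.Quotient.mk_eq_zero, Submodule.mem_comap, Submodule.coe_subtype,
        Submodule.coe_inclusion]
      exact hle hx)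

/-- The restriction map `Hom_A((I+L)/(I²+L), A/(I+L)) → Hom_A(I/(I²+I·L), A/(I+L))`. -/
noncomputable def qRes (L I : Ideal A) :
    ((↥(I + L) ⧸ Submodule.comap (I + L).subtype (I ^ 2 + L)) →ₗ[A] A ⧸ (I + L)) →ₗ[A]
      ((↥I ⧸ Submodule.comap I.subtype (I ^ 2 + I * L)) →ₗ[A] A ⧸ (I + L)) :=
  LinearMap.lcomp A (A ⧸ (I + L)) (qIota A L I)

/-- The module `Q(L,I)`: the cokernel of the restriction map
`Hom_A((I+L)/(I²+L), A/(I+L)) → Hom_A(I/(I²+I·L), A/(I+L))`. -/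
noncomputable abbrev Qmod (L I : Ideal A) :=
  ((↥I ⧸ Submodule.comap I.subtype (I ^ 2 + I * L)) →ₗ[A] A ⧸ (I + L)) ⧸
    LinearMap.range (qRes A L I)

/-- If `I ∩ L = I·L` then `Q(L,I) = 0`; equivalently, the restriction map
`Hom_A((I+L)/(I²+L), A/(I+L)) → Hom_A(I/(I²+I·L), A/(I+L))` is surjective. -/
theorem fibers_stmt1 {A : Type*} [CommRing A] (I L : Ideal A) (h : I ⊓ L = I * L) :
    Subsingleton (Qmod A L I) ∧ Function.Surjective (qRes A L I) := by
  -- key: I ∩ (I²+L) = I² + I·L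
  have key : ∀ x ∈ I, x ∈ I ^ 2 + L → x ∈ I ^ 2 + I * L := by
    intro x hxI hx
    rw [Submodule.add_eq_sup, Submodule.mem_sup] at hx
    obtain ⟨a, ha, l, hl, rfl⟩ := hx
    have haI : a ∈ I := by
      have : I ^ 2 ≤ I := by
        rw [pow_two]; exact Ideal.mul_le_left
      exact this ha
    have hlI : l ∈ I := by
      have : l = a + l - a := by ring
      rw [this]; exact Submodule.sub_mem _ hxI haI
    have hlIL : l ∈ I * L := h ▸ ⟨hlI, hl⟩
    rw [Submodule.add_eq_sup, Submodule.mem_sup]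
    exact ⟨a, ha, l, hlIL, rfl⟩
  -- qIota is bijective
  have hinj : Function.Injective (qIota A L I) := by
    rw [← LinearMap.ker_eq_bot, LinearMap.ker_eq_bot']
    intro m hm
    obtain ⟨x, rfl⟩ := Submodule.Quotient.mk_surjective _ m
    rw [qIota, Submodule.liftQ_apply] at hm
    simp only [LinearMap.comp_apply, Submodule.mkQ_apply,
      Submodule.Quotient.mk_eq_zero, Submodule.mem_comap, Submodule.coe_subtype,
      Submodule.coe_inclusion] at hm
    rw [Submodule.Quotient.mk_eq_zero]
    exact key x.1 x.2 hm
  have hsurj : Function.Surjective (qIota A L I) := by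
    intro m
    obtain ⟨y, rfl⟩ := Submodule.Quotient.mk_surjective _ m
    obtain ⟨i, hi, l, hl, hil⟩ := Submodule.mem_sup.mp y.2
    refine ⟨Submodule.Quotient.mk ⟨i, hi⟩, ?_⟩
    rw [qIota, Submodule.liftQ_apply]
    simp only [LinearMap.comp_apply, Submodule.mkQ_apply]
    rw [Submodule.Quotient.eq]
    rw [Submodule.mem_comap, Submodule.subtype_apply]
    rw [AddSubgroupClass.coe_sub, Submodule.coe_inclusion, ← hil,
      show i - (i + l) = -l by ring]
    exact Submodule.neg_mem _ (Submodule.mem_sup_right hl)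
  let e : (↥I ⧸ Submodule.comap I.subtype (I ^ 2 + I * L)) ≃ₗ[A]
      (↥(I + L) ⧸ Submodule.comap (I + L).subtype (I ^ 2 + L)) :=
    LinearEquiv.ofBijective (qIota A L I) ⟨hinj, hsurj⟩
  have hres : Function.Surjective (qRes A L I) := by
    intro g
    refine ⟨g.comp (e.symm : _ →ₗ[A] _), ?_⟩
    refine LinearMap.ext fun m => ?_
    simp only [qRes, LinearMap.lcomp_apply, LinearMap.comp_apply]
    congr 1
    exact e.symm_apply_apply m
  refine ⟨?_, hres⟩
  rw [Submodule.Quotient.subsingleton_iff, LinearMap.range_eq_top]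
  exact hres
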